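/- Let k, k′ > 0, m ∈ ℤ, and let σ : ℝ → ℂ be measurable. Let r = (x, y), r′ = (x′, y′) and r_c = (x_c, y_c) be points of ℝ², and let (ρ_c, θ_c) be the polar coordinates of r − r_c. Assume that for each n ∈ ℤ the function λ ↦ 𝓔^{kk′}(x_c − x′, y_c, y′)·ω(λ,k)^n·ω(λ,k′)^m·σ(λ) is integrable on ℝ, and that Σ_{n∈ℤ} |J_n(kρ_c)|·∫_ℝ |𝓔^{kk′}(x_c − x′, y_c, y′)·ω(λ,k)^n·ω(λ,k′)^m·σ(λ)| dλ < ∞. Then the integral 𝓘^{kk′}_{0m}(x − x′, y, y′, σ) exists and 𝓘^{kk′}_{0m}(x − x′, y, y′, σ) = Σ_{n∈ℤ} J_n(kρ_c)·e^{inθ_c}·𝓘^{kk′}_{nm}(x_c − x′, y_c, y′, σ), the series on the right converging absolutely. -/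

import Mathlib

open Complex MeasureTheory Filter

/-- The branch of the vertical wavenumber: κ(λ,k) = √(k²−λ²) if |λ| ≤ k,
and κ(λ,k) = i√(λ²−k²) if |λ| > k. -/
noncomputable def kappa (lam k : ℝ) : ℂ :=
  if |lam| ≤ k then ((Real.sqrt (k ^ 2 - lam ^ 2) : ℝ) : ℂ)
  else Complex.I * ((Real.sqrt (lam ^ 2 - k ^ 2) : ℝ) : ℂ)

/-- ω(λ,k) = (κ(λ,k) + iλ)/k. -/
noncomputable def omega (lam k : ℝ) : ℂ := (kappa lam k + Complex.I * (lam : ℂ)) / (k : ℂ)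

/-- The plane-wave kernel 𝓔^{kk′}(x, y, y′) = exp(iλx + iκ(λ,k)y − iκ(λ,k′)y′). -/
noncomputable def pwKernel (k k' lam x y y' : ℝ) : ℂ :=
  Complex.exp (Complex.I * (lam : ℂ) * (x : ℂ) + Complex.I * kappa lam k * (y : ℂ)
    - Complex.I * kappa lam k' * (y' : ℂ))

/-- Bessel function of the first kind of nonnegative integer order, via its power series. -/
noncomputable def besselJnat (n : ℕ) (z : ℂ) : ℂ :=
  ∑' m : ℕ, ((-1 : ℂ) ^ m / ((m.factorial : ℂ) * ((m + n).factorial : ℂ))) * (z / 2) ^ (2 * m + n)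

/-- Bessel function of the first kind of integer order, with J_{−n} = (−1)^n J_n. -/
noncomputable def besselJ (n : ℤ) (z : ℂ) : ℂ :=
  if 0 ≤ n then besselJnat n.toNat z else (-1 : ℂ) ^ ((-n).toNat) * besselJnat ((-n).toNat) z

/-- Integrand of the Sommerfeld-type integral 𝓘^{kk′}_{nm}. -/
noncomputable def sommerfeldIntegrand (k k' : ℝ) (n m : ℤ) (x y y' : ℝ) (σ : ℝ → ℂ)
    (lam : ℝ) : ℂ :=
  pwKernel k k' lam x y y' * (omega lam k) ^ n * (omega lam k') ^ m * σ lam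

/-- The Sommerfeld-type integral 𝓘^{kk′}_{nm}(x, y, y′, σ). -/
noncomputable def sommerfeld (k k' : ℝ) (n m : ℤ) (x y y' : ℝ) (σ : ℝ → ℂ) : ℂ :=
  ∫ lam : ℝ, sommerfeldIntegrand k k' n m x y y' σ lam

/-! ### Auxiliary lemmas -/

lemma kappa_sq {k : ℝ} (hk : 0 < k) (lam : ℝ) :
    kappa lam k ^ 2 = (k:ℂ)^2 - (lam:ℂ)^2 := by
  unfold kappa
  split_ifs with h
  · have h2 : (0:ℝ) ≤ k^2 - lam^2 := by nlinarith [_root_.sq_abs lam, abs_nonneg lam]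
    rw [← Complex.ofReal_pow, Real.sq_sqrt h2]
    push_cast; ring
  · push_neg at h
    have h2 : (0:ℝ) ≤ lam^2 - k^2 := by nlinarith [_root_.sq_abs lam, abs_nonneg lam]
    rw [mul_pow, Complex.I_sq, ← Complex.ofReal_pow, Real.sq_sqrt h2]
    push_cast; ring

lemma omega_mul {k : ℝ} (hk : 0 < k) (lam : ℝ) :
    omega lam k * ((kappa lam k - Complex.I * lam) / k) = 1 := by
  have hk0 : (k:ℂ) ≠ 0 := by exact_mod_cast hk.ne'
  unfold omega
  field_simp
  linear_combination kappa_sq hk lam - (lam:ℂ)^2 * Complex.I_sq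

lemma omega_ne_zero {k : ℝ} (hk : 0 < k) (lam : ℝ) : omega lam k ≠ 0 :=
  left_ne_zero_of_mul_eq_one (omega_mul hk lam)

lemma omega_inv {k : ℝ} (hk : 0 < k) (lam : ℝ) :
    (omega lam k)⁻¹ = (kappa lam k - Complex.I * lam) / k :=
  inv_eq_of_mul_eq_one_right (omega_mul hk lam)

/-- Regrouping bijection for the Cauchy product of the two exponential series. -/
def pairEquiv : ℤ × ℕ ≃ ℕ × ℕ where
  toFun p := (p.1.toNat + p.2, (-p.1).toNat + p.2)
  invFun p := ((p.1 : ℤ) - p.2, min p.1 p.2)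
  left_inv := by rintro ⟨n, j⟩; simp only [Prod.mk.injEq]; constructor <;> omega
  right_inv := by rintro ⟨p, q⟩; simp only [Prod.mk.injEq]; constructor <;> omega

lemma termEq_pos (z w : ℂ) (hw : w ≠ 0) (N j : ℕ) :
    (z*w/2)^(N+j) / (N+j).factorial * ((-(z/2) * w⁻¹)^j / j.factorial)
    = ((-1:ℂ)^j / (j.factorial * ((j+N).factorial)) * (z/2)^(2*j+N)) * w^N := by
  have h1 : (((N+j).factorial : ℕ) : ℂ) ≠ 0 := by exact_mod_cast (N+j).factorial_ne_zero
  have h2 : ((j.factorial : ℕ) : ℂ) ≠ 0 := by exact_mod_cast j.factorial_ne_zero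
  have hc : (j + N).factorial = (N + j).factorial := by rw [Nat.add_comm]
  rw [hc]
  have e1 : (z*w/2)^(N+j) = (z/2)^(N+j) * (w^N * w^j) := by
    rw [← pow_add]; ring
  have e2 : (-(z/2) * w⁻¹)^j = (-1:ℂ)^j * (z/2)^j * (w^j)⁻¹ := by
    rw [← inv_pow, ← mul_pow, ← mul_pow]; ring_nf
  have e4 : (z/2)^(N+j) * (z/2)^j = (z/2)^(2*j+N) := by
    rw [← pow_add]; congr 1; omega
  have hwj : w^j ≠ 0 := pow_ne_zero _ hw
  rw [e1, e2]
  rw [← e4]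
  field_simp

lemma termEq_neg (z w : ℂ) (hw : w ≠ 0) (N j : ℕ) :
    (z*w/2)^j / j.factorial * ((-(z/2) * w⁻¹)^(N+j) / (N+j).factorial)
    = ((-1:ℂ)^N * ((-1:ℂ)^j / (j.factorial * ((j+N).factorial)) * (z/2)^(2*j+N))) * (w^N)⁻¹ := by
  have h1 : (((N+j).factorial : ℕ) : ℂ) ≠ 0 := by exact_mod_cast (N+j).factorial_ne_zero
  have h2 : ((j.factorial : ℕ) : ℂ) ≠ 0 := by exact_mod_cast j.factorial_ne_zero
  have hc : (j + N).factorial = (N + j).factorial := by rw [Nat.add_comm]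
  rw [hc]
  have e1 : (z*w/2)^j = (z/2)^j * w^j := by rw [← mul_pow]; ring_nf
  have e2 : (-(z/2) * w⁻¹)^(N+j) = (-1:ℂ)^N * (-1:ℂ)^j * ((z/2)^(N+j)) * ((w^N)⁻¹ * (w^j)⁻¹) := by
    rw [mul_pow, pow_add w⁻¹, inv_pow w N, inv_pow w j,
      show -(z/2) = (-1:ℂ)*(z/2) from by ring, mul_pow, pow_add]
  have e4 : (z/2)^j * (z/2)^(N+j) = (z/2)^(2*j+N) := by
    rw [← pow_add]; congr 1; omega
  have hwj : w^j ≠ 0 := pow_ne_zero _ hw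
  have hwN : w^N ≠ 0 := pow_ne_zero _ hw
  rw [e1, e2, ← e4]
  linear_combination ((-1:ℂ)^N * ((-1:ℂ)^j / ((j.factorial : ℂ) * (((N+j).factorial : ℕ) : ℂ)) *
    ((z/2)^j * (z/2)^(N+j)))) * (w^N)⁻¹ * (mul_inv_cancel₀ hwj)

lemma norm_term (c : ℂ) (p : ℕ) : ‖c^p / (p.factorial : ℂ)‖ = ‖c‖^p / (p.factorial : ℝ) := by
  rw [norm_div, norm_pow]
  congr 1
  simp

set_option maxHeartbeats 1000000 in
/-- Jacobi–Anger type generating-function expansion: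
`exp (z/2 (w − w⁻¹)) = ∑_{n ∈ ℤ} J_n(z) wⁿ`, absolutely convergent. -/
lemma jacobiAnger (z w : ℂ) (hw : w ≠ 0) :
    Summable (fun n : ℤ => ‖besselJ n z * w ^ n‖) ∧
    HasSum (fun n : ℤ => besselJ n z * w ^ n) (Complex.exp (z / 2 * (w - w⁻¹))) := by
  set a : ℕ → ℂ := fun p => (z*w/2)^p / p.factorial with ha_def
  set b : ℕ → ℂ := fun q => (-(z/2) * w⁻¹)^q / q.factorial with hb_def
  have hna : Summable fun p => ‖a p‖ := by
    simpa [ha_def, norm_term] using Real.summable_pow_div_factorial ‖z*w/2‖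
  have hnb : Summable fun q => ‖b q‖ := by
    simpa [hb_def, norm_term] using Real.summable_pow_div_factorial ‖-(z/2)*w⁻¹‖
  have hab : Summable (fun pq : ℕ×ℕ => ‖a pq.1 * b pq.2‖) := by
    simpa [norm_mul] using hna.mul_of_nonneg hnb (fun p => norm_nonneg _) (fun q => norm_nonneg _)
  have hf : Summable (fun pq : ℕ×ℕ => a pq.1 * b pq.2) := hab.of_norm
  have hta : ∑' p, a p = Complex.exp (z*w/2) := by
    rw [Complex.exp_eq_exp_ℂ, NormedSpace.exp_eq_tsum_div]
  have htb : ∑' q, b q = Complex.exp (-(z/2) * w⁻¹) := by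
    rw [Complex.exp_eq_exp_ℂ, NormedSpace.exp_eq_tsum_div]
  have hprod : ∑' pq : ℕ×ℕ, a pq.1 * b pq.2 = Complex.exp (z/2 * (w - w⁻¹)) := by
    have hb2 : Summable b := hnb.of_norm
    rw [Summable.tsum_prod' hf (fun p => hb2.mul_left (a p))]
    simp_rw [tsum_mul_left]
    rw [tsum_mul_right, hta, htb, ← Complex.exp_add]
    congr 1
    ring
  -- reindex
  have hg : Summable (fun x : ℤ×ℕ => ‖a (pairEquiv x).1 * b (pairEquiv x).2‖) :=
    (Equiv.summable_iff pairEquiv).2 hab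
  have hg' : Summable (fun x : ℤ×ℕ => a (pairEquiv x).1 * b (pairEquiv x).2) := hg.of_norm
  have hgt : HasSum (fun x : ℤ×ℕ => a (pairEquiv x).1 * b (pairEquiv x).2)
      (Complex.exp (z/2 * (w - w⁻¹))) := by
    have := hg'.hasSum
    rwa [show ∑' x : ℤ×ℕ, a (pairEquiv x).1 * b (pairEquiv x).2
      = Complex.exp (z/2 * (w - w⁻¹)) from by
        rw [← hprod]; exact pairEquiv.tsum_eq (fun pq : ℕ×ℕ => a pq.1 * b pq.2)] at this
  have hrow : ∀ n : ℤ, Summable (fun j : ℕ => ‖a (pairEquiv (n, j)).1 * b (pairEquiv (n, j)).2‖) := by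
    intro n
    have hinj : Function.Injective (fun j : ℕ => ((n, j) : ℤ × ℕ)) :=
      fun j₁ j₂ h => (Prod.ext_iff.mp h).2
    exact hg.comp_injective hinj
  have hinner : ∀ n : ℤ, ∑' j : ℕ, a (pairEquiv (n, j)).1 * b (pairEquiv (n, j)).2
      = besselJ n z * w ^ n := by
    intro n
    rcases le_or_gt 0 n with hn | hn
    · have hneg : (-n).toNat = 0 := by omega
      have hcomp : ∀ j : ℕ, a (pairEquiv (n, j)).1 * b (pairEquiv (n, j)).2
          = ((-1:ℂ)^j / (j.factorial * ((j+n.toNat).factorial)) * (z/2)^(2*j+n.toNat)) * w^n.toNat := by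
        intro j
        show a (n.toNat + j) * b ((-n).toNat + j) = _
        rw [hneg, zero_add, ha_def, hb_def]
        exact termEq_pos z w hw n.toNat j
      have hwn : w ^ n = w ^ n.toNat := by
        rw [← zpow_natCast]; congr 1; omega
      rw [tsum_congr hcomp, tsum_mul_right, besselJ, if_pos hn, hwn]
      rfl
    · have hpos : n.toNat = 0 := by omega
      set N := (-n).toNat with hN
      have hcomp : ∀ j : ℕ, a (pairEquiv (n, j)).1 * b (pairEquiv (n, j)).2
          = ((-1:ℂ)^N * ((-1:ℂ)^j / (j.factorial * ((j+N).factorial)) * (z/2)^(2*j+N))) * (w^N)⁻¹ := by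
        intro j
        show a (n.toNat + j) * b ((-n).toNat + j) = _
        rw [hpos, zero_add, ha_def, hb_def]
        exact termEq_neg z w hw N j
      rw [tsum_congr hcomp, tsum_mul_right]
      have hwn : w ^ n = (w ^ N)⁻¹ := by
        rw [show n = -(N : ℤ) from by omega, zpow_neg, zpow_natCast]
      rw [besselJ, if_neg (by omega), hwn]
      have : ∑' j : ℕ, (-1:ℂ)^N * ((-1:ℂ)^j / (j.factorial * ((j+N).factorial)) * (z/2)^(2*j+N))
          = (-1:ℂ)^N * besselJnat N z := tsum_mul_left
      rw [this]
  have hfib : ∀ n : ℤ, HasSum (fun j : ℕ => a (pairEquiv (n, j)).1 * b (pairEquiv (n, j)).2)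
      (besselJ n z * w ^ n) := by
    intro n
    have := ((hrow n).of_norm).hasSum
    rwa [hinner n] at this
  constructor
  · have h1 : HasSum (fun n : ℤ => ∑' j, ‖a (pairEquiv (n, j)).1 * b (pairEquiv (n, j)).2‖)
        (∑' x : ℤ×ℕ, ‖a (pairEquiv x).1 * b (pairEquiv x).2‖) :=
      hg.hasSum.prod_fiberwise (fun n => (hrow n).hasSum)
    refine h1.summable.of_nonneg_of_le (fun n => norm_nonneg _) (fun n => ?_)
    rw [← hinner n]
    exact norm_tsum_le_tsum_norm (hrow n)
  · exact hgt.prod_fiberwise hfib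

lemma exponent_eq {k : ℝ} (hk : 0 < k) (lam ρc θc : ℝ) :
    (((k * ρc : ℝ) : ℂ) / 2) * (omega lam k * Complex.exp ((θc : ℂ) * Complex.I)
      - (omega lam k * Complex.exp ((θc : ℂ) * Complex.I))⁻¹)
    = Complex.I * lam * ((ρc * Real.cos θc : ℝ) : ℂ)
      + Complex.I * kappa lam k * ((ρc * Real.sin θc : ℝ) : ℂ) := by
  have hk0 : (k:ℂ) ≠ 0 := by exact_mod_cast hk.ne'
  rw [mul_inv, omega_inv hk, ← Complex.exp_neg,
    show -((θc : ℂ) * Complex.I) = (-θc : ℂ) * Complex.I by ring,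
    Complex.exp_mul_I, Complex.exp_mul_I, Complex.cos_neg, Complex.sin_neg]
  unfold omega
  push_cast
  field_simp
  ring

set_option maxHeartbeats 1000000 in
/-- Pointwise multipole expansion of the Sommerfeld integrand. -/
lemma pointwise_hasSum (k k' : ℝ) (hk : 0 < k) (m : ℤ) (σ : ℝ → ℂ)
    (x y x' y' xc yc ρc θc : ℝ)
    (hxc : x - xc = ρc * Real.cos θc) (hyc : y - yc = ρc * Real.sin θc) (lam : ℝ) :
    HasSum (fun n : ℤ => besselJ n ((k * ρc : ℝ) : ℂ)
        * Complex.exp (Complex.I * (n:ℂ) * (θc:ℂ))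
        * sommerfeldIntegrand k k' n m (xc - x') yc y' σ lam)
      (sommerfeldIntegrand k k' 0 m (x - x') y y' σ lam) ∧
    Summable (fun n : ℤ => ‖besselJ n ((k * ρc : ℝ) : ℂ)
        * Complex.exp (Complex.I * (n:ℂ) * (θc:ℂ))
        * sommerfeldIntegrand k k' n m (xc - x') yc y' σ lam‖) := by
  set w := omega lam k * Complex.exp ((θc:ℂ) * Complex.I) with hw_def
  have hw : w ≠ 0 := mul_ne_zero (omega_ne_zero hk lam) (Complex.exp_ne_zero _)
  obtain ⟨hsumm, hhs⟩ := jacobiAnger ((k * ρc : ℝ) : ℂ) w hw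
  set C := pwKernel k k' lam (xc - x') yc y' * (omega lam k') ^ m * σ lam with hC_def
  have hterm : ∀ n : ℤ, besselJ n ((k * ρc : ℝ) : ℂ) * w ^ n * C
      = besselJ n ((k * ρc : ℝ) : ℂ) * Complex.exp (Complex.I * (n:ℂ) * (θc:ℂ))
        * sommerfeldIntegrand k k' n m (xc - x') yc y' σ lam := by
    intro n
    have hwn : w ^ n = omega lam k ^ n * Complex.exp (Complex.I * (n:ℂ) * (θc:ℂ)) := by
      rw [hw_def, mul_zpow]
      congr 1
      rw [← Complex.exp_int_mul]
      congr 1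
      ring
    rw [hwn, hC_def]
    simp only [sommerfeldIntegrand]
    ring
  have hval : Complex.exp (((k * ρc : ℝ):ℂ) / 2 * (w - w⁻¹)) * C
      = sommerfeldIntegrand k k' 0 m (x - x') y y' σ lam := by
    rw [hw_def, exponent_eq hk lam ρc θc, ← hxc, ← hyc, hC_def]
    simp only [sommerfeldIntegrand, pwKernel, zpow_zero]
    rw [show Complex.exp (Complex.I * ↑lam * ↑(x - xc) + Complex.I * kappa lam k * ↑(y - yc)) *
        (Complex.exp (Complex.I * ↑lam * ↑(xc - x') + Complex.I * kappa lam k * ↑yc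
          - Complex.I * kappa lam k' * ↑y') * omega lam k' ^ m * σ lam)
      = (Complex.exp (Complex.I * ↑lam * ↑(x - xc) + Complex.I * kappa lam k * ↑(y - yc)) *
          Complex.exp (Complex.I * ↑lam * ↑(xc - x') + Complex.I * kappa lam k * ↑yc
          - Complex.I * kappa lam k' * ↑y')) * omega lam k' ^ m * σ lam from by ring,
      ← Complex.exp_add]
    rw [show Complex.I * ↑lam * ↑(x - xc) + Complex.I * kappa lam k * ↑(y - yc) +
        (Complex.I * ↑lam * ↑(xc - x') + Complex.I * kappa lam k * ↑yc
          - Complex.I * kappa lam k' * ↑y')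
      = Complex.I * ↑lam * ↑(x - x') + Complex.I * kappa lam k * ↑y
          - Complex.I * kappa lam k' * ↑y' from by push_cast; ring]
    ring
  refine ⟨?_, ?_⟩
  · have h1 := hhs.mul_right C
    rw [hval] at h1
    rwa [funext hterm] at h1
  · exact (hsumm.mul_right ‖C‖).congr (fun n => by rw [← norm_mul, hterm n])

lemma measurable_kappa (k : ℝ) : Measurable (fun lam => kappa lam k) := by
  unfold kappa
  refine Measurable.ite (measurableSet_le measurable_norm measurable_const) ?_ ?_
  · exact (Complex.continuous_ofReal.comp
      (Real.continuous_sqrt.comp (by continuity))).measurable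
  · exact (continuous_const.mul (Complex.continuous_ofReal.comp
      (Real.continuous_sqrt.comp (by continuity)))).measurable

lemma measurable_zpow_comp {f : ℝ → ℂ} (hf : Measurable f) (m : ℤ) :
    Measurable fun t => f t ^ m := by
  cases m with
  | ofNat n => simpa using hf.pow_const n
  | negSucc n => simp only [zpow_negSucc]; exact (hf.pow_const (n+1)).inv

lemma measurable_sommerfeldIntegrand (k k' : ℝ) (n m : ℤ) (x y y' : ℝ) (σ : ℝ → ℂ)
    (hσ : Measurable σ) : Measurable (sommerfeldIntegrand k k' n m x y y' σ) := by
  have hk : Measurable (fun lam => kappa lam k) := measurable_kappa k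
  have hk' : Measurable (fun lam => kappa lam k') := measurable_kappa k'
  have hlam : Measurable (fun lam : ℝ => (lam : ℂ)) := Complex.measurable_ofReal
  have hpw : Measurable (fun lam => pwKernel k k' lam x y y') := by
    apply Complex.measurable_exp.comp
    exact (((measurable_const.mul hlam).mul_const _).add
      ((measurable_const.mul hk).mul_const _)).sub ((measurable_const.mul hk').mul_const _)
  have ho : Measurable (fun lam => omega lam k) := (hk.add (measurable_const.mul hlam)).div_const _
  have ho' : Measurable (fun lam => omega lam k') :=
    (hk'.add (measurable_const.mul hlam)).div_const _
  exact ((hpw.mul (measurable_zpow_comp ho n)).mul (measurable_zpow_comp ho' m)).mul hσ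

set_option maxHeartbeats 1000000 in
/-- multipole expansion of the Sommerfeld-type integral 𝓘^{kk′}_{0m} about a
center r_c near the target r. Under the stated integrability and summability hypotheses,
𝓘^{kk′}_{0m}(x−x′, y, y′, σ) exists and equals the absolutely convergent series
Σ_{n∈ℤ} J_n(kρ_c) e^{inθ_c} 𝓘^{kk′}_{nm}(x_c−x′, y_c, y′, σ). -/
theorem sommerfeld_multipole_expansion
    (k k' : ℝ) (hk : 0 < k) (hk' : 0 < k') (m : ℤ) (σ : ℝ → ℂ) (hσ : Measurable σ)
    (x y x' y' xc yc ρc θc : ℝ)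
    (hρc : 0 ≤ ρc)
    (hxc : x - xc = ρc * Real.cos θc) (hyc : y - yc = ρc * Real.sin θc)
    (hint : ∀ n : ℤ, MeasureTheory.Integrable
      (sommerfeldIntegrand k k' n m (xc - x') yc y' σ))
    (hsum : Summable (fun n : ℤ => ‖(besselJ n ((k * ρc : ℝ) : ℂ))‖
      * ∫ lam : ℝ, ‖(sommerfeldIntegrand k k' n m (xc - x') yc y' σ lam)‖)) :
    MeasureTheory.Integrable (sommerfeldIntegrand k k' 0 m (x - x') y y' σ) ∧
    Summable (fun n : ℤ =>
      ‖besselJ n ((k * ρc : ℝ) : ℂ) * Complex.exp (Complex.I * (n : ℂ) * (θc : ℂ))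
        * sommerfeld k k' n m (xc - x') yc y' σ‖) ∧
    sommerfeld k k' 0 m (x - x') y y' σ
      = ∑' n : ℤ, besselJ n ((k * ρc : ℝ) : ℂ)
          * Complex.exp (Complex.I * (n : ℂ) * (θc : ℂ))
          * sommerfeld k k' n m (xc - x') yc y' σ := by
  set F : ℤ → ℝ → ℂ := fun n lam => besselJ n ((k * ρc : ℝ) : ℂ)
      * Complex.exp (Complex.I * (n:ℂ) * (θc:ℂ))
      * sommerfeldIntegrand k k' n m (xc - x') yc y' σ lam with hF_def
  have hpw : ∀ lam : ℝ, HasSum (fun n : ℤ => F n lam)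
      (sommerfeldIntegrand k k' 0 m (x - x') y y' σ lam) ∧
      Summable (fun n : ℤ => ‖F n lam‖) :=
    fun lam => pointwise_hasSum k k' hk m σ x y x' y' xc yc ρc θc hxc hyc lam
  have hFint : ∀ n : ℤ, Integrable (F n) := fun n => (hint n).const_mul _
  have hnormExp : ∀ n : ℤ, ‖Complex.exp (Complex.I * (n:ℂ) * (θc:ℂ))‖ = 1 := by
    intro n
    rw [show Complex.I * (n:ℂ) * (θc:ℂ) = (((n : ℝ) * θc : ℝ) : ℂ) * Complex.I from by
      push_cast; ring]
    exact Complex.norm_exp_ofReal_mul_I _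
  have hnormF : ∀ n lam, ‖F n lam‖ = ‖besselJ n ((k * ρc : ℝ) : ℂ)‖
      * ‖sommerfeldIntegrand k k' n m (xc - x') yc y' σ lam‖ := by
    intro n lam
    rw [hF_def]
    simp only [norm_mul, hnormExp n, mul_one]
  have hIntNorm : ∀ n : ℤ, ∫ lam : ℝ, ‖F n lam‖
      = ‖besselJ n ((k * ρc : ℝ) : ℂ)‖
        * ∫ lam : ℝ, ‖sommerfeldIntegrand k k' n m (xc - x') yc y' σ lam‖ := by
    intro n
    simp_rw [hnormF n]
    exact MeasureTheory.integral_const_mul _ _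
  have hsum' : Summable (fun n : ℤ => ∫ lam : ℝ, ‖F n lam‖) := by
    simp_rw [hIntNorm]
    exact hsum
  have hInt0 : Integrable (sommerfeldIntegrand k k' 0 m (x - x') y y' σ) := by
    refine ⟨(measurable_sommerfeldIntegrand k k' 0 m (x - x') y y' σ hσ).aestronglyMeasurable, ?_⟩
    unfold HasFiniteIntegral
    calc ∫⁻ lam, (‖sommerfeldIntegrand k k' 0 m (x - x') y y' σ lam‖₊ : ENNReal)
        ≤ ∫⁻ lam, ∑' n : ℤ, (‖F n lam‖₊ : ENNReal) := by
          refine lintegral_mono (fun lam => ?_)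
          have hs : Summable (fun n : ℤ => ‖F n lam‖₊) := by
            rw [← NNReal.summable_coe]
            exact (hpw lam).2
          rw [← (hpw lam).1.tsum_eq, ← ENNReal.coe_tsum hs]
          exact ENNReal.coe_le_coe.2 (nnnorm_tsum_le hs)
      _ = ∑' n : ℤ, ∫⁻ lam, (‖F n lam‖₊ : ENNReal) :=
          lintegral_tsum (fun n => (hFint n).aestronglyMeasurable.enorm)
      _ = ∑' n : ℤ, ENNReal.ofReal (∫ lam, ‖F n lam‖) := by
          refine tsum_congr (fun n => ?_)
          exact (MeasureTheory.ofReal_integral_norm_eq_lintegral_enorm (hFint n)).symm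
      _ = ENNReal.ofReal (∑' n : ℤ, ∫ lam, ‖F n lam‖) :=
          (ENNReal.ofReal_tsum_of_nonneg
            (fun n => integral_nonneg (fun lam => norm_nonneg _)) hsum').symm
      _ < ⊤ := ENNReal.ofReal_lt_top
  refine ⟨hInt0, ?_, ?_⟩
  · refine hsum.of_nonneg_of_le (fun n => norm_nonneg _) (fun n => ?_)
    rw [norm_mul, norm_mul, hnormExp n, mul_one]
    refine mul_le_mul_of_nonneg_left ?_ (norm_nonneg _)
    exact norm_integral_le_integral_norm _
  · have heq : sommerfeld k k' 0 m (x - x') y y' σ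
        = ∫ lam : ℝ, ∑' n : ℤ, F n lam := by
      unfold sommerfeld
      exact integral_congr_ae (Filter.Eventually.of_forall
        (fun lam => ((hpw lam).1.tsum_eq).symm))
    rw [heq, ← MeasureTheory.integral_tsum_of_summable_integral_norm hFint hsum']
    refine tsum_congr (fun n => ?_)
    unfold sommerfeld
    rw [hF_def]
    simp only
    rw [← MeasureTheory.integral_const_mul]
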